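/- arXiv:1312.4248 — 2 statements merged into one kernel-verified Lean document; each statement's English description precedes it below -/
import Mathlib

section
/- If a_c > 0 is small enough that σ'(0) > a_c^2 k_0^6, a_c k_0^2 < 1, and a_c k^4(k^2 − (a_c+1)k_0^2) > −σ'(0) for the finitely many integers 1 ≤ k ≤ |k_0| − 1, then (a_c, (a_c+1)k_0^2) is an admissible critical configuration point; in particular A(k_0) is infinite. -/
/-- If `a_c > 0` is small enough that `σ'(0) > a_c^2 k_0^6`, `a_c k_0^2 < 1`, and
`a_c k^4(k^2 - (a_c+1)k_0^2) > -σ'(0)` for `1 ≤ k ≤ |k_0| - 1`, then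
`(a_c, (a_c+1)k_0^2)` is an admissible critical configuration point; in particular the
admissible set `A(k_0)` is infinite. -/
theorem admissible_of_small_positive (k0 : ℤ) (hk0 : k0 ≠ 0) (σ1 : ℝ) (hσ : 0 < σ1)
    (ac : ℝ) (hac : 0 < ac) (h1 : σ1 > ac ^ 2 * (k0 : ℝ) ^ 6) (h2 : ac * (k0 : ℝ) ^ 2 < 1)
    (h3 : ∀ k : ℤ, 1 ≤ k → k ≤ |k0| - 1 →
      ac * (k : ℝ) ^ 4 * ((k : ℝ) ^ 2 - (ac + 1) * (k0 : ℝ) ^ 2) > -σ1) :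
    (ac, (ac + 1) * (k0 : ℝ) ^ 2) ∈
      {p : ℝ × ℝ | p.2 = (p.1 + 1) * (k0 : ℝ) ^ 2 ∧ p.2 ≠ 0 ∧ σ1 > p.1 ^ 2 * (k0 : ℝ) ^ 6 ∧
        ∀ k : ℤ, k ≠ 0 → k ≠ k0 → k ≠ -k0 →
          p.1 * (k : ℝ) ^ 4 * ((k : ℝ) ^ 2 - p.2) ≠ -σ1} ∧
    Set.Infinite
      {p : ℝ × ℝ | p.2 = (p.1 + 1) * (k0 : ℝ) ^ 2 ∧ p.2 ≠ 0 ∧ σ1 > p.1 ^ 2 * (k0 : ℝ) ^ 6 ∧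
        ∀ k : ℤ, k ≠ 0 → k ≠ k0 → k ≠ -k0 →
          p.1 * (k : ℝ) ^ 4 * ((k : ℝ) ^ 2 - p.2) ≠ -σ1} := by
  have hk0R : (k0 : ℝ) ≠ 0 := Int.cast_ne_zero.mpr hk0
  have hk0sq : (0 : ℝ) < (k0 : ℝ) ^ 2 := by positivity
  have key : ∀ a : ℝ, 0 < a → a ≤ ac →
      (a, (a + 1) * (k0 : ℝ) ^ 2) ∈
      {p : ℝ × ℝ | p.2 = (p.1 + 1) * (k0 : ℝ) ^ 2 ∧ p.2 ≠ 0 ∧ σ1 > p.1 ^ 2 * (k0 : ℝ) ^ 6 ∧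
        ∀ k : ℤ, k ≠ 0 → k ≠ k0 → k ≠ -k0 →
          p.1 * (k : ℝ) ^ 4 * ((k : ℝ) ^ 2 - p.2) ≠ -σ1} := by
    intro a ha hale
    simp only [Set.mem_setOf_eq]
    refine ⟨trivial, ?_, ?_, ?_⟩
    · have : (0:ℝ) < (a + 1) * (k0 : ℝ) ^ 2 := by nlinarith
      exact ne_of_gt this
    · have hk6 : (0:ℝ) < (k0:ℝ)^6 := by positivity
      nlinarith [hk6, mul_self_le_mul_self ha.le hale]
    · intro k hk hkk0 hkk0'
      -- reduce to j = |k|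
      set j : ℤ := |k| with hj
      have hj1 : 1 ≤ j := hj ▸ Int.one_le_abs hk
      have hjne : j ≠ |k0| := by
        intro h
        rcases abs_eq_abs.mp (hj ▸ h) with h' | h' <;> omega
      have hcast2 : ((k : ℝ)) ^ 2 = ((j : ℝ)) ^ 2 := by
        rw [hj]; push_cast [Int.cast_abs]; rw [sq_abs]
      have hcast4 : ((k : ℝ)) ^ 4 = ((j : ℝ)) ^ 4 := by
        have : ((k:ℝ))^4 = (((k:ℝ))^2)^2 := by ring
        rw [this, hcast2]; ring
      rw [hcast2, hcast4]
      have hjpos : (0:ℝ) < (j:ℝ) := by exact_mod_cast hj1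
      have hx4 : (0:ℝ) < (j:ℝ)^4 := by positivity
      rcases lt_or_ge j |k0| with hlt | hge
      · -- small case: 1 ≤ j ≤ |k0| - 1
        have h3j := h3 j hj1 (by omega)
        -- show strict inequality > -σ1
        have : a * (j:ℝ)^4 * ((j:ℝ)^2 - (a + 1) * (k0:ℝ)^2) > -σ1 := by
          set X := (j:ℝ)^2 - (a + 1) * (k0:ℝ)^2 with hX
          set Y := (j:ℝ)^2 - (ac + 1) * (k0:ℝ)^2 with hY
          have hXY : Y ≤ X := by
            simp only [hX, hY]
            nlinarith
          rcases le_or_gt 0 X with hX0 | hX0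
          · have : 0 ≤ a * (j:ℝ)^4 * X := by positivity
            linarith
          · have h1' : a * X ≥ ac * Y := by nlinarith
            have : a * (j:ℝ)^4 * X ≥ ac * (j:ℝ)^4 * Y := by nlinarith
            linarith
        exact ne_of_gt this
      · -- large case: j ≥ |k0| + 1
        have hge' : |k0| + 1 ≤ j := by omega
        have hk0abs : ((|k0| : ℤ) : ℝ) = |(k0 : ℝ)| := by push_cast [Int.cast_abs]; rfl
        have hgeR : |(k0:ℝ)| + 1 ≤ (j:ℝ) := by
          rw [← hk0abs]; exact_mod_cast hge'
        have habs0 : (0:ℝ) ≤ |(k0:ℝ)| := abs_nonneg _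
        have habssq : |(k0:ℝ)|^2 = (k0:ℝ)^2 := sq_abs _
        have hak0 : a * (k0:ℝ)^2 < 1 := by nlinarith
        have hXpos : (0:ℝ) < (j:ℝ)^2 - (a + 1) * (k0:ℝ)^2 := by nlinarith
        have : 0 < a * (j:ℝ)^4 * ((j:ℝ)^2 - (a + 1) * (k0:ℝ)^2) := by positivity
        exact ne_of_gt (by linarith)
  refine ⟨key ac hac le_rfl, ?_⟩
  have hsub : (fun a : ℝ => (a, (a + 1) * (k0 : ℝ) ^ 2)) '' Set.Ioc 0 ac ⊆
      {p : ℝ × ℝ | p.2 = (p.1 + 1) * (k0 : ℝ) ^ 2 ∧ p.2 ≠ 0 ∧ σ1 > p.1 ^ 2 * (k0 : ℝ) ^ 6 ∧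
        ∀ k : ℤ, k ≠ 0 → k ≠ k0 → k ≠ -k0 →
          p.1 * (k : ℝ) ^ 4 * ((k : ℝ) ^ 2 - p.2) ≠ -σ1} := by
    rintro p ⟨a, ⟨ha0, hale⟩, rfl⟩
    exact key a ha0 hale
  refine Set.Infinite.mono hsub ?_
  refine Set.Infinite.image ?_ (Set.Ioc_infinite hac)
  intro x _ y _ h
  exact congrArg Prod.fst h
end

section
/- The complex number b_0 = (i k_0^3 σ''(0)^2 / (2 ω_c)) / D + i σ'''(0) k_0^2/(4 ω_c), with D = −2σ'(0)k_0 + (2iω_c − 4δ_c k_0^2 + 16 k_0^4)(−iω_c k_0^{−1} − 8 a_c k_0^3), has real part Re b_0 = −6 k_0^6 σ''(0)^2 δ_c / α, where α = (−2σ'(0)k_0^2 + 2ω_c^2 − 32 k_0^8 a_c(3 − a_c))^2 + 144 k_0^4 ω_c^2 δ_c^2, provided δ_c = (a_c+1)k_0^2 and ω_c^2 = σ'(0)k_0^2 − a_c^2 k_0^8 > 0. -/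
open Complex

/-!
Substituting `δ_c = (a_c + 1) k_0²` collapses the denominator to `D = A/k_0 − 12 ω_c δ_c k_0 i` with
`A = −2σ'(0)k_0² + 2ω_c² − 32 k_0⁸ a_c(3 − a_c)`, so `|D|² = α / k_0²`. The term carrying `σ'''(0)`
is purely imaginary, and `Re (i r / D) = r Im D / |D|²` for real `r` gives the claim.
-/

lemma re_I_mul_ofReal_div (r a b : ℝ) :
    (I * r / (a + b * I)).re = r * b / (a ^ 2 + b ^ 2) := by
  simp only [div_re, mul_re, mul_im, add_re, add_im, ofReal_re, ofReal_im, I_re, I_im,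
    normSq_add_mul_I]
  ring

lemma re_I_mul_ofReal_div_ofReal (s w : ℝ) : (I * s / w).re = 0 := by
  simp [div_re]

lemma re_coupling_coeff (r s w a b : ℝ) :
    ((I * r / (2 * (w : ℂ))) / (a + b * I) + I * s / (4 * (w : ℂ))).re =
      r * b / (2 * w * (a ^ 2 + b ^ 2)) := by
  have h₁ : I * r / (2 * (w : ℂ)) = I * ((r / (2 * w) : ℝ) : ℂ) := by push_cast; ring
  have h₂ : (4 * (w : ℂ)) = ((4 * w : ℝ) : ℂ) := by push_cast; ring
  rw [add_re, h₁, h₂, re_I_mul_ofReal_div, re_I_mul_ofReal_div_ofReal, add_zero,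
    div_mul_eq_mul_div, div_div]

lemma coupling_denominator_eq (ac δc σ1 k0 ωc : ℝ) (hk : k0 ≠ 0) (hδ : δc = (ac + 1) * k0 ^ 2) :
    (-2 * σ1 * k0 : ℂ) + (2 * I * ωc - 4 * δc * k0 ^ 2 + 16 * k0 ^ 4) *
        (-(I * ωc) * (k0 : ℂ)⁻¹ - 8 * ac * k0 ^ 3) =
      (((-2 * σ1 * k0 ^ 2 + 2 * ωc ^ 2 - 32 * k0 ^ 8 * ac * (3 - ac)) / k0 : ℝ) : ℂ) +
        ((-12 * ωc * δc * k0 : ℝ) : ℂ) * I := by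
  have hk' : (k0 : ℂ) ≠ 0 := ofReal_ne_zero.mpr hk
  subst hδ
  push_cast
  field_simp
  ring_nf
  rw [I_sq]
  ring

theorem real_part_b0_general (ac δc σ1 σ2 σ3 k0 ωc : ℝ) (hk : k0 ≠ 0)
    (hδ : δc = (ac + 1) * k0 ^ 2)
    (hωpos : 0 < ωc) :
    ((I * (k0 ^ 3 * σ2 ^ 2 : ℝ) / (2 * (ωc : ℂ))) /
        ((-2 * σ1 * k0 : ℂ) + (2 * I * ωc - 4 * δc * k0 ^ 2 + 16 * k0 ^ 4) *
          (-(I * ωc) * (k0 : ℂ)⁻¹ - 8 * ac * k0 ^ 3)) +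
      I * (σ3 * k0 ^ 2 : ℝ) / (4 * (ωc : ℂ))).re =
    -6 * k0 ^ 6 * σ2 ^ 2 * δc /
      ((-2 * σ1 * k0 ^ 2 + 2 * ωc ^ 2 - 32 * k0 ^ 8 * ac * (3 - ac)) ^ 2 +
        144 * k0 ^ 4 * ωc ^ 2 * δc ^ 2) := by
  set A := -2 * σ1 * k0 ^ 2 + 2 * ωc ^ 2 - 32 * k0 ^ 8 * ac * (3 - ac)
  set α := A ^ 2 + 144 * k0 ^ 4 * ωc ^ 2 * δc ^ 2
  have hω0 : 2 * ωc ≠ 0 := by positivity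
  have hnormSq : (A / k0) ^ 2 + (-12 * ωc * δc * k0) ^ 2 = α / k0 ^ 2 := by
    field_simp
    ring
  rw [coupling_denominator_eq ac δc σ1 k0 ωc hk hδ, re_coupling_coeff, hnormSq]
  calc k0 ^ 3 * σ2 ^ 2 * (-12 * ωc * δc * k0) / (2 * ωc * (α / k0 ^ 2))
      = 2 * ωc * (-6 * k0 ^ 6 * σ2 ^ 2 * δc) / (2 * ωc * α) := by
        field_simp
        ring
    _ = -6 * k0 ^ 6 * σ2 ^ 2 * δc / α := mul_div_mul_left _ _ hω0

/-- The cubic self-coupling coefficient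
`b_0 = (i k_0^3 σ''(0)^2/(2ω_c))/D + i σ'''(0) k_0^2/(4ω_c)` has real part
`−6 k_0^6 σ''(0)^2 δ_c / α` with
`α = (−2σ'(0)k_0^2 + 2ω_c^2 − 32 k_0^8 a_c(3 − a_c))^2 + 144 k_0^4 ω_c^2 δ_c^2`,
provided `δ_c = (a_c+1)k_0^2` and `ω_c^2 = σ'(0)k_0^2 − a_c^2 k_0^8 > 0`. -/
theorem real_part_b0 (ac δc σ1 σ2 σ3 k0 ωc : ℝ) (hk : k0 ≠ 0)
    (hδ : δc = (ac + 1) * k0 ^ 2) (hω : ωc ^ 2 = σ1 * k0 ^ 2 - ac ^ 2 * k0 ^ 8)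
    (hωpos : 0 < ωc)
    (hD : (-2 * σ1 * k0 : ℂ) + (2 * I * ωc - 4 * δc * k0 ^ 2 + 16 * k0 ^ 4) *
      (-(I * ωc) * (k0 : ℂ)⁻¹ - 8 * ac * k0 ^ 3) ≠ 0)
    (hα : 0 < (-2 * σ1 * k0 ^ 2 + 2 * ωc ^ 2 - 32 * k0 ^ 8 * ac * (3 - ac)) ^ 2 +
      144 * k0 ^ 4 * ωc ^ 2 * δc ^ 2) :
    ((I * (k0 ^ 3 * σ2 ^ 2 : ℝ) / (2 * (ωc : ℂ))) /
        ((-2 * σ1 * k0 : ℂ) + (2 * I * ωc - 4 * δc * k0 ^ 2 + 16 * k0 ^ 4) *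
          (-(I * ωc) * (k0 : ℂ)⁻¹ - 8 * ac * k0 ^ 3)) +
      I * (σ3 * k0 ^ 2 : ℝ) / (4 * (ωc : ℂ))).re =
    -6 * k0 ^ 6 * σ2 ^ 2 * δc /
      ((-2 * σ1 * k0 ^ 2 + 2 * ωc ^ 2 - 32 * k0 ^ 8 * ac * (3 - ac)) ^ 2 +
        144 * k0 ^ 4 * ωc ^ 2 * δc ^ 2) :=
  real_part_b0_general ac δc σ1 σ2 σ3 k0 ωc hk hδ hωpos
end
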